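/- arXiv:1712.03604 — 5 statements merged into one kernel-verified Lean document; each statement's English description precedes it below -/
import Mathlib

section
/- Let J ∈ ℝ^{2N×2N} be an invertible skew-symmetric matrix, let W ∈ ℝ^{2N×2N} be J-symplectic, and let U ∈ ℝ^{2N×k} satisfy UᵀJU = 0. Then the rank-k perturbation W̃ = (I + UUᵀJ)W is J-symplectic, i.e. W̃ᵀJW̃ = J. -/
open Matrix

/-- A rank-k perturbation `(I + UUᵀJ)W` of a J-symplectic matrix `W`,
where the columns of `U` span an isotropic subspace, is J-symplectic. -/
theorem rank_k_perturbation_symplectic {N k : ℕ}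
    (J W : Matrix (Fin (2 * N)) (Fin (2 * N)) ℝ)
    (U : Matrix (Fin (2 * N)) (Fin k) ℝ)
    (hJskew : Jᵀ = -J) (hJinv : IsUnit J)
    (hW : Wᵀ * J * W = J) (hU : Uᵀ * J * U = 0) :
    ((1 + U * Uᵀ * J) * W)ᵀ * J * ((1 + U * Uᵀ * J) * W) = J := by
  have hzero : J * U * (Uᵀ * J * U) * Uᵀ * J = 0 := by
    rw [hU]; simp
  have key : (1 + U * Uᵀ * J)ᵀ * J * (1 + U * Uᵀ * J) = J := by
    have h1 : (1 + U * Uᵀ * J)ᵀ = 1 - J * U * Uᵀ := by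
      simp [Matrix.transpose_add, Matrix.transpose_mul, hJskew, Matrix.neg_mul,
        Matrix.mul_assoc, sub_eq_add_neg]
    rw [h1]
    have : (1 - J * U * Uᵀ) * J * (1 + U * Uᵀ * J)
        = J + J * (U * (Uᵀ * J)) - J * U * Uᵀ * J
          - J * U * (Uᵀ * J * U) * Uᵀ * J := by
      simp only [Matrix.sub_mul, Matrix.mul_add, Matrix.add_mul, Matrix.one_mul,
        Matrix.mul_one, Matrix.mul_assoc]
      abel
    rw [this, hzero]
    simp [Matrix.mul_assoc]
  calc ((1 + U * Uᵀ * J) * W)ᵀ * J * ((1 + U * Uᵀ * J) * W)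
      = Wᵀ * ((1 + U * Uᵀ * J)ᵀ * J * (1 + U * Uᵀ * J)) * W := by
        simp only [Matrix.transpose_mul, Matrix.mul_assoc]
    _ = Wᵀ * J * W := by rw [key, Matrix.mul_assoc]
    _ = J := hW
end

section
/- Let J ∈ ℝ^{2N×2N} be an invertible skew-symmetric matrix, let H : ℝ → ℝ^{2N×2N} be such that H(t) is symmetric for every t, let U ∈ ℝ^{2N×k} satisfy UᵀJU = 0, and let X : ℝ → ℝ^{2N×2N} be differentiable with J·X′(t) = H(t)·X(t) for all t. Then X̃(t) = (I + UUᵀJ)X(t) is differentiable and satisfies the perturbed Hamiltonian system J·X̃′(t) = (H(t) + E(t))·X̃(t) for all t, where E(t) = (JUUᵀH(t))ᵀ + JUUᵀH(t) + (UUᵀJ)ᵀ H(t) (UUᵀJ). -/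
/-!
Write `P = UUᵀJ`. Isotropy of `U` gives `P² = 0`, so `S = 1 + P` has inverse `1 - P`, and
skew-symmetry of `J` gives `JS = (1 - P)ᵀJ`, i.e. `S` is symplectic. A symplectic change of
variables `X̃ = SX` turns `JX' = HX` into `JX̃' = S⁻ᵀHS⁻¹X̃`, and for symmetric `H` the
conjugate `(1 - P)ᵀH(1 - P)` expands to exactly `H + E`.
-/

open Matrix

theorem Matrix.hasDerivAt_mul_apply {𝕜 : Type*} [NontriviallyNormedField 𝕜]
    {l m n : Type*} [Fintype m] (A : Matrix l m 𝕜) {X : 𝕜 → Matrix m n 𝕜}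
    {X' : Matrix m n 𝕜} {t : 𝕜} (hX : ∀ i j, HasDerivAt (fun s => X s i j) (X' i j) t)
    (i : l) (j : n) : HasDerivAt (fun s => (A * X s) i j) ((A * X') i j) t := by
  simp only [mul_apply]
  exact HasDerivAt.fun_sum fun r _ => (hX r j).const_mul _

theorem one_sub_mul_one_add_of_mul_self_eq_zero {α : Type*} [Ring α] {p : α}
    (hp : p * p = 0) : (1 - p) * (1 + p) = 1 := by
  rw [sub_mul, one_mul, mul_add, mul_one, hp]
  abel

section

variable {n ι R : Type*} [Fintype n] [Fintype ι] [CommRing R]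

theorem Matrix.symplectic_change_of_variables [DecidableEq n] {J H S T X X' : Matrix n n R}
    (hTS : T * S = 1) (hJS : J * S = Tᵀ * J) (hsys : J * X' = H * X) :
    J * (S * X') = Tᵀ * H * T * (S * X) := by
  calc J * (S * X') = Tᵀ * (J * X') := by rw [← Matrix.mul_assoc, hJS, Matrix.mul_assoc]
    _ = Tᵀ * H * T * (S * X) := by
      rw [hsys, Matrix.mul_assoc _ T, ← Matrix.mul_assoc T, hTS, Matrix.one_mul,
        Matrix.mul_assoc]

variable {J : Matrix n n R} {U : Matrix n ι R}

theorem Matrix.mul_transpose_mul_mul_self_eq_zero (hU : Uᵀ * J * U = 0) :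
    U * Uᵀ * J * (U * Uᵀ * J) = 0 := by
  calc U * Uᵀ * J * (U * Uᵀ * J) = U * (Uᵀ * J * U) * Uᵀ * J := by
        simp only [Matrix.mul_assoc]
    _ = 0 := by rw [hU, Matrix.mul_zero, Matrix.zero_mul, Matrix.zero_mul]

variable [DecidableEq n]

theorem Matrix.mul_one_add_mul_transpose_mul (hJ : Jᵀ = -J) :
    J * (1 + U * Uᵀ * J) = (1 - U * Uᵀ * J)ᵀ * J := by
  simp only [transpose_sub, transpose_one, transpose_mul, transpose_transpose, hJ,
    Matrix.mul_add, Matrix.add_mul, Matrix.mul_one, Matrix.one_mul, Matrix.neg_mul,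
    Matrix.mul_assoc, sub_neg_eq_add]

theorem Matrix.add_perturbation_eq_transpose_mul_mul {H : Matrix n n R} (hJ : Jᵀ = -J)
    (hH : Hᵀ = H) :
    H + ((J * U * Uᵀ * H)ᵀ + J * U * Uᵀ * H + (U * Uᵀ * J)ᵀ * H * (U * Uᵀ * J)) =
      (1 - U * Uᵀ * J)ᵀ * H * (1 - U * Uᵀ * J) := by
  simp only [transpose_sub, transpose_one, transpose_mul, transpose_transpose, hJ, hH,
    Matrix.mul_sub, Matrix.add_mul, Matrix.mul_one, Matrix.one_mul, Matrix.neg_mul,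
    Matrix.mul_neg, Matrix.mul_assoc, sub_neg_eq_add]
  abel

end

theorem perturbed_solution_solves_perturbed_system_general {N k : ℕ}
    (J : Matrix (Fin (2 * N)) (Fin (2 * N)) ℝ)
    (hJskew : Jᵀ = -J)
    (H : ℝ → Matrix (Fin (2 * N)) (Fin (2 * N)) ℝ)
    (hH : ∀ t, (H t)ᵀ = H t)
    (U : Matrix (Fin (2 * N)) (Fin k) ℝ) (hU : Uᵀ * J * U = 0)
    (X X' : ℝ → Matrix (Fin (2 * N)) (Fin (2 * N)) ℝ)
    (hX : ∀ t, ∀ i j, HasDerivAt (fun s => X s i j) (X' t i j) t)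
    (hsys : ∀ t, J * X' t = H t * X t) :
    ∀ t, (∀ i j, HasDerivAt (fun s => ((1 + U * Uᵀ * J) * X s : Matrix (Fin (2 * N)) (Fin (2 * N)) ℝ) i j)
            (((1 + U * Uᵀ * J) * X' t : Matrix (Fin (2 * N)) (Fin (2 * N)) ℝ) i j) t) ∧
      J * ((1 + U * Uᵀ * J) * X' t) =
        (H t + ((J * U * Uᵀ * H t)ᵀ + J * U * Uᵀ * H t
            + (U * Uᵀ * J)ᵀ * H t * (U * Uᵀ * J))) * ((1 + U * Uᵀ * J) * X t) := by
  intro t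
  refine ⟨hasDerivAt_mul_apply _ (hX t), ?_⟩
  rw [add_perturbation_eq_transpose_mul_mul hJskew (hH t)]
  exact symplectic_change_of_variables
    (one_sub_mul_one_add_of_mul_self_eq_zero (mul_transpose_mul_mul_self_eq_zero hU))
    (mul_one_add_mul_transpose_mul hJskew) (hsys t)

/-- If `X` solves the Hamiltonian system `J X' = H X`, then `X̃ = (I + UUᵀJ)X` solves the
perturbed Hamiltonian system `J X̃' = (H + E) X̃` with
`E = (JUUᵀH)ᵀ + JUUᵀH + (UUᵀJ)ᵀ H (UUᵀJ)`. -/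
theorem perturbed_solution_solves_perturbed_system {N k : ℕ}
    (J : Matrix (Fin (2 * N)) (Fin (2 * N)) ℝ)
    (hJskew : Jᵀ = -J) (hJinv : IsUnit J)
    (H : ℝ → Matrix (Fin (2 * N)) (Fin (2 * N)) ℝ)
    (hH : ∀ t, (H t)ᵀ = H t)
    (U : Matrix (Fin (2 * N)) (Fin k) ℝ) (hU : Uᵀ * J * U = 0)
    (X X' : ℝ → Matrix (Fin (2 * N)) (Fin (2 * N)) ℝ)
    (hX : ∀ t, ∀ i j, HasDerivAt (fun s => X s i j) (X' t i j) t)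
    (hsys : ∀ t, J * X' t = H t * X t) :
    ∀ t, (∀ i j, HasDerivAt (fun s => ((1 + U * Uᵀ * J) * X s : Matrix (Fin (2 * N)) (Fin (2 * N)) ℝ) i j)
            (((1 + U * Uᵀ * J) * X' t : Matrix (Fin (2 * N)) (Fin (2 * N)) ℝ) i j) t) ∧
      J * ((1 + U * Uᵀ * J) * X' t) =
        (H t + ((J * U * Uᵀ * H t)ᵀ + J * U * Uᵀ * H t
            + (U * Uᵀ * J)ᵀ * H t * (U * Uᵀ * J))) * ((1 + U * Uᵀ * J) * X t) :=
  perturbed_solution_solves_perturbed_system_general J hJskew H hH U hU X X' hX hsys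
end

section
/- Let J_{2N} = [[0, I_N], [−I_N, 0]] and let H ∈ ℝ^{2N×2N} be J_{2N}-Hamiltonian. Then there exists a Lagrangian subspace L ⊆ ℝ^{2N} invariant under H if and only if there exists a J_{2N}-symplectic matrix W such that the column space of W·[I_N; 0_N] equals L and W⁻¹HW has the Hamiltonian block-triangular form [[R, D], [0, −Rᵀ]] for some R, D ∈ ℝ^{N×N}. -/
open Matrix

/-- The standard symplectic matrix `J_{2N} = [[0, I], [-I, 0]]`. -/
noncomputable def stdJ (N : ℕ) : Matrix (Fin N ⊕ Fin N) (Fin N ⊕ Fin N) ℝ :=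
  Matrix.fromBlocks 0 1 (-1) 0

/-- The `2N × N` matrix `[I_N; 0_N]`. -/
noncomputable def colI (N : ℕ) : Matrix (Fin N ⊕ Fin N) (Fin N) ℝ :=
  Matrix.fromRows 1 0

/-!
An invariant Lagrangian subspace `L` is the range of an injective `X` with `XᵀJX = 0`. Completing
`X` by `Y = JX(XᵀX)⁻¹` gives a symplectic `W = [X Y]` whose first `N` columns span `L`.
Invariance of `L` makes the first block column of `K = W⁻¹HW` equal to `[R; 0]`, and `K` is again
Hamiltonian, which forces its lower-right block to be `-Rᵀ`. Conversely, the first `N` columns of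
a symplectic matrix span a Lagrangian subspace, invariant under `H` once `W⁻¹HW` is block upper
triangular.
-/

namespace Matrix

section RangeMulVecLin

variable {m n R : Type*} [Fintype m] [Fintype n] [CommRing R]

theorem eq_zero_of_forall_dotProduct_mulVec_eq_zero {B : Matrix m n R}
    (hB : ∀ u v, u ⬝ᵥ (B *ᵥ v) = 0) : B = 0 := by
  classical
  ext i j
  simpa [mulVec_single_one, single_one_dotProduct] using hB (Pi.single i 1) (Pi.single j 1)

theorem forall_mem_range_mulVecLin_dotProduct_mulVec_eq_zero_iff (M : Matrix m n R)
    (A : Matrix m m R) :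
    (∀ x ∈ LinearMap.range M.mulVecLin, ∀ y ∈ LinearMap.range M.mulVecLin,
      x ⬝ᵥ (A *ᵥ y) = 0) ↔ Mᵀ * A * M = 0 := by
  have key : ∀ u v, (M *ᵥ u) ⬝ᵥ (A *ᵥ (M *ᵥ v)) = u ⬝ᵥ ((Mᵀ * A * M) *ᵥ v) := fun u v => by
    rw [← mulVec_mulVec, ← mulVec_mulVec, mulVec_transpose, dotProduct_comm u,
      ← dotProduct_mulVec, dotProduct_comm]
  simp only [LinearMap.mem_range, mulVecLin_apply, forall_exists_index, forall_apply_eq_imp_iff,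
    key]
  exact ⟨eq_zero_of_forall_dotProduct_mulVec_eq_zero, fun h u v => by simp [h]⟩

theorem forall_mem_range_mulVecLin_mulVec_mem_iff (M : Matrix m n R) (H : Matrix m m R) :
    (∀ x ∈ LinearMap.range M.mulVecLin, H *ᵥ x ∈ LinearMap.range M.mulVecLin) ↔
      ∃ S : Matrix n n R, H * M = M * S := by
  classical
  simp only [LinearMap.mem_range, mulVecLin_apply, forall_exists_index, forall_apply_eq_imp_iff]
  constructor
  · intro h
    choose r hr using fun j => h (Pi.single j 1)
    refine ⟨(of r)ᵀ, ext_of_mulVec_single fun j => ?_⟩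
    rw [← mulVec_mulVec, ← mulVec_mulVec, ← hr, mulVec_single_one]
    rfl
  · rintro ⟨S, hS⟩ v
    exact ⟨S *ᵥ v, by rw [mulVec_mulVec, mulVec_mulVec, hS]⟩

end RangeMulVecLin

section Symplectic

variable {l R : Type*} [Fintype l] [DecidableEq l] [CommRing R]

variable (l R) in
abbrev fromRowsOneZero : Matrix (l ⊕ l) l R := fromRows 1 0

/- Mathlib's `J l R` is `[[0, -1], [1, 0]]`, the negative of `stdJ`; being Hamiltonian, Lagrangian
or symplectic is insensitive to this sign (see `stdJ_eq_neg_J`). -/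
def IsHamiltonian (H : Matrix (l ⊕ l) (l ⊕ l) R) : Prop :=
  (J l R * H)ᵀ = J l R * H

def IsLagrangian (L : Submodule R (l ⊕ l → R)) : Prop :=
  Module.finrank R L = Fintype.card l ∧ ∀ x ∈ L, ∀ y ∈ L, x ⬝ᵥ (J l R *ᵥ y) = 0

theorem J_mul_inv_of_mem_symplecticGroup {W : Matrix (l ⊕ l) (l ⊕ l) R}
    (hW : W ∈ symplecticGroup l R) : J l R * W⁻¹ = Wᵀ * J l R := by
  simp [SymplecticGroup.inv_eq_symplectic_inv W hW, ← Matrix.mul_assoc, J_squared]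

theorem IsHamiltonian.conj_of_mem_symplecticGroup {H W : Matrix (l ⊕ l) (l ⊕ l) R}
    (hH : IsHamiltonian H) (hW : W ∈ symplecticGroup l R) : IsHamiltonian (W⁻¹ * H * W) := by
  have h : J l R * (W⁻¹ * H * W) = Wᵀ * (J l R * H) * W := by
    rw [← Matrix.mul_assoc, ← Matrix.mul_assoc, J_mul_inv_of_mem_symplecticGroup hW,
      Matrix.mul_assoc Wᵀ]
  unfold IsHamiltonian at hH ⊢
  rw [h, transpose_mul, transpose_mul, transpose_transpose, hH]
  simp only [Matrix.mul_assoc]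

theorem transpose_fromRowsOneZero_mul_J_mul :
    (fromRowsOneZero l R)ᵀ * J l R * fromRowsOneZero l R = 0 := by
  simp [J, transpose_fromRows, fromCols_mul_fromBlocks, fromCols_mul_fromRows]

theorem fromBlocks_mul_fromRowsOneZero (A B D : Matrix l l R) :
    fromBlocks A B 0 D * fromRowsOneZero l R = fromRowsOneZero l R * A := by
  simp [fromBlocks_mul_fromRows, fromRows_mul]

theorem IsHamiltonian.exists_eq_fromBlocks_of_mul_fromRowsOneZero
    {K : Matrix (l ⊕ l) (l ⊕ l) R} {S : Matrix l l R} (hK : IsHamiltonian K)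
    (hS : K * fromRowsOneZero l R = fromRowsOneZero l R * S) :
    ∃ D, K = fromBlocks S D 0 (-Sᵀ) := by
  obtain ⟨A, B, C, D, rfl⟩ : ∃ A B C D, K = fromBlocks A B C D :=
    ⟨_, _, _, _, (fromBlocks_toBlocks K).symm⟩
  simp only [fromBlocks_mul_fromRows, fromRows_mul, Matrix.mul_one, Matrix.mul_zero, add_zero,
    Matrix.one_mul,
    Matrix.zero_mul, fromRows_ext_iff] at hS
  obtain ⟨rfl, rfl⟩ := hS
  simp only [IsHamiltonian, J, fromBlocks_multiply, fromBlocks_transpose, fromBlocks_inj,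
    Matrix.zero_mul, Matrix.neg_mul, Matrix.one_mul, Matrix.mul_zero, add_zero, zero_add] at hK
  exact ⟨B, by rw [hK.2.1, neg_neg]⟩

end Symplectic

section Field

variable {m n l K : Type*} [Fintype n] [Fintype l] [DecidableEq l] [Field K]

theorem exists_injective_mulVec_range_mulVecLin_eq [Fintype m] (L : Submodule K (m → K))
    (hL : Module.finrank K L = Fintype.card n) :
    ∃ X : Matrix m n K, Function.Injective X.mulVec ∧ LinearMap.range X.mulVecLin = L := by
  classical
  let e : (n → K) ≃ₗ[K] L :=
    LinearEquiv.ofFinrankEq _ _ (by rw [Module.finrank_fintype_fun_eq_card, hL])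
  have hX := toLin'_toMatrix' (L.subtype ∘ₗ e.toLinearMap)
  refine ⟨LinearMap.toMatrix' (L.subtype ∘ₗ e.toLinearMap), ?_, ?_⟩
  · rw [← coe_mulVecLin, ← toLin'_apply', hX]
    exact L.injective_subtype.comp e.injective
  · rw [← toLin'_apply', hX, LinearMap.range_comp_of_range_eq_top _ e.range,
      Submodule.range_subtype]

theorem finrank_range_mulVecLin_of_injective {M : Matrix m n K}
    (hM : Function.Injective M.mulVec) :
    Module.finrank K (LinearMap.range M.mulVecLin) = Fintype.card n :=
  (LinearMap.finrank_range_of_inj hM).trans (Module.finrank_fintype_fun_eq_card K)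

theorem injective_mulVec_fromRowsOneZero :
    Function.Injective (fromRowsOneZero l K).mulVec := fun u v h => by
  rw [fromRows_mulVec, fromRows_mulVec] at h
  simpa using (Sum.elim_eq_iff.1 h).1

theorem isLagrangian_range_mul_fromRowsOneZero {W : Matrix (l ⊕ l) (l ⊕ l) K}
    (hW : W ∈ symplecticGroup l K) :
    IsLagrangian (LinearMap.range (W * fromRowsOneZero l K).mulVecLin) := by
  refine ⟨finrank_range_mulVecLin_of_injective fun u v h => ?_, ?_⟩
  · rw [← mulVec_mulVec, ← mulVec_mulVec] at h
    have hWinj := mulVec_injective_iff_isUnit.2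
      ((isUnit_iff_isUnit_det W).2 (SymplecticGroup.symplectic_det hW))
    exact injective_mulVec_fromRowsOneZero (hWinj h)
  · rw [forall_mem_range_mulVecLin_dotProduct_mulVec_eq_zero_iff, transpose_mul]
    calc _ = (fromRowsOneZero l K)ᵀ * (Wᵀ * J l K * W) * fromRowsOneZero l K := by
          simp only [Matrix.mul_assoc]
      _ = 0 := by rw [SymplecticGroup.mem_iff'.1 hW, transpose_fromRowsOneZero_mul_J_mul]

theorem mulVec_mem_range_mul_fromRowsOneZero {H W : Matrix (l ⊕ l) (l ⊕ l) K}
    {S D D' : Matrix l l K} (hW : IsUnit W.det) (hHW : W⁻¹ * H * W = fromBlocks S D 0 D') :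
    ∀ x ∈ LinearMap.range (W * fromRowsOneZero l K).mulVecLin,
      H *ᵥ x ∈ LinearMap.range (W * fromRowsOneZero l K).mulVecLin := by
  rw [forall_mem_range_mulVecLin_mulVec_mem_iff]
  refine ⟨S, ?_⟩
  calc H * (W * fromRowsOneZero l K) = W * (W⁻¹ * H * W) * fromRowsOneZero l K := by
        rw [Matrix.mul_assoc W⁻¹, mul_nonsing_inv_cancel_left _ _ hW, Matrix.mul_assoc]
    _ = W * fromRowsOneZero l K * S := by
        rw [hHW, Matrix.mul_assoc, fromBlocks_mul_fromRowsOneZero, Matrix.mul_assoc]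

end Field

section OrderedField

variable {m n l K : Type*} [Fintype m] [Fintype n] [DecidableEq n] [Fintype l] [DecidableEq l]
  [Field K] [LinearOrder K] [IsStrictOrderedRing K]

theorem isUnit_det_transpose_mul_self_of_injective {X : Matrix m n K}
    (hX : Function.Injective X.mulVec) : IsUnit (Xᵀ * X).det := by
  refine (isUnit_iff_isUnit_det _).1 (mulVec_injective_iff_isUnit.1 ?_)
  have hker : LinearMap.ker (Xᵀ * X).mulVecLin = ⊥ := by
    rw [ker_mulVecLin_transpose_mul_self, LinearMap.ker_eq_bot]
    exact hX
  exact LinearMap.ker_eq_bot.1 hker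

theorem exists_mem_symplecticGroup_mul_fromRowsOneZero_eq {X : Matrix (l ⊕ l) l K}
    (hX : Function.Injective X.mulVec) (hXJX : Xᵀ * J l K * X = 0) :
    ∃ W ∈ symplecticGroup l K, W * fromRowsOneZero l K = X := by
  have hG := isUnit_det_transpose_mul_self_of_injective hX
  set G := Xᵀ * X with hGdef
  have hGt : G⁻¹ᵀ = G⁻¹ := by rw [transpose_nonsing_inv, hGdef, transpose_mul, transpose_transpose]
  have hJJ : ∀ M : Matrix (l ⊕ l) l K, J l K * (J l K * M) = -M := fun M => by
    rw [← Matrix.mul_assoc, J_squared, Matrix.neg_mul, Matrix.one_mul]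
  -- `Y` completes `X` to a symplectic basis: `XᵀJY = -1`, and `YᵀJY = G⁻¹ (XᵀJX) G⁻¹ = 0`.
  set Y := J l K * X * G⁻¹ with hY
  have hYt : Yᵀ = -(G⁻¹ * Xᵀ * J l K) := by
    rw [hY, transpose_mul, transpose_mul, hGt, J_transpose]
    simp only [Matrix.mul_neg, Matrix.mul_assoc]
  have hXJY : Xᵀ * J l K * Y = -1 := by
    simp only [hY, Matrix.mul_assoc, hJJ]
    rw [Matrix.mul_neg, ← Matrix.mul_assoc, ← hGdef, mul_nonsing_inv _ hG]
  have hYJX : Yᵀ * J l K * X = 1 := by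
    simp only [hYt, Matrix.neg_mul, Matrix.mul_assoc, hJJ, Matrix.mul_neg, neg_neg]
    rw [← hGdef, nonsing_inv_mul _ hG]
  have hYJY : Yᵀ * J l K * Y = 0 := by
    rw [hYt, hY]
    simp only [Matrix.neg_mul, Matrix.mul_assoc, hJJ, Matrix.mul_neg, neg_neg]
    rw [← Matrix.mul_assoc (J l K), ← Matrix.mul_assoc Xᵀ, ← Matrix.mul_assoc Xᵀ, hXJX,
      Matrix.zero_mul, Matrix.mul_zero]
  refine ⟨fromCols X Y, ?_, by simp [fromCols_mul_fromRows]⟩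
  rw [SymplecticGroup.mem_iff', transpose_fromCols, fromRows_mul, fromRows_mul_fromCols, hXJX,
    hXJY, hYJX, hYJY, J]

theorem IsLagrangian.exists_mem_symplecticGroup_conj_eq_fromBlocks
    {H : Matrix (l ⊕ l) (l ⊕ l) K} (hH : IsHamiltonian H) {L : Submodule K (l ⊕ l → K)}
    (hL : IsLagrangian L) (hHL : ∀ x ∈ L, H *ᵥ x ∈ L) :
    ∃ W ∈ symplecticGroup l K, ∃ S D : Matrix l l K,
      LinearMap.range (W * fromRowsOneZero l K).mulVecLin = L ∧
      W⁻¹ * H * W = fromBlocks S D 0 (-Sᵀ) := by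
  obtain ⟨X, hXinj, rfl⟩ := exists_injective_mulVec_range_mulVecLin_eq L hL.1
  obtain ⟨W, hW, rfl⟩ := exists_mem_symplecticGroup_mul_fromRowsOneZero_eq hXinj
    ((forall_mem_range_mulVecLin_dotProduct_mulVec_eq_zero_iff _ _).1 hL.2)
  obtain ⟨S, hS⟩ := (forall_mem_range_mulVecLin_mulVec_mem_iff _ _).1 hHL
  have hK : W⁻¹ * H * W * fromRowsOneZero l K = fromRowsOneZero l K * S := by
    simp only [Matrix.mul_assoc]
    rw [hS, Matrix.mul_assoc, nonsing_inv_mul_cancel_left _ _ (SymplecticGroup.symplectic_det hW)]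
  obtain ⟨D, hD⟩ :=
    (hH.conj_of_mem_symplecticGroup hW).exists_eq_fromBlocks_of_mul_fromRowsOneZero hK
  exact ⟨W, hW, S, D, rfl, hD⟩

end OrderedField

end Matrix

theorem stdJ_eq_neg_J (N : ℕ) : stdJ N = -J (Fin N) ℝ := by
  simp [stdJ, J, fromBlocks_neg]

/-- For a Hamiltonian matrix `H`, a subspace `L` is a Lagrangian invariant subspace of `H`
if and only if there is a symplectic matrix `W` whose first `N` columns span `L` and with
`W⁻¹ H W` in Hamiltonian block triangular form `[[R, D], [0, -Rᵀ]]`. -/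
theorem lagrangian_invariant_iff_block_triangular {N : ℕ}
    (H : Matrix (Fin N ⊕ Fin N) (Fin N ⊕ Fin N) ℝ)
    (hH : (stdJ N * H)ᵀ = stdJ N * H)
    (L : Submodule ℝ (Fin N ⊕ Fin N → ℝ)) :
    (Module.finrank ℝ L = N ∧ (∀ x ∈ L, ∀ y ∈ L, x ⬝ᵥ (stdJ N *ᵥ y) = 0) ∧
      (∀ x ∈ L, H *ᵥ x ∈ L)) ↔
    (∃ (W : Matrix (Fin N ⊕ Fin N) (Fin N ⊕ Fin N) ℝ) (R D : Matrix (Fin N) (Fin N) ℝ),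
      Wᵀ * stdJ N * W = stdJ N ∧
      LinearMap.range (Matrix.mulVecLin (W * colI N)) = L ∧
      W⁻¹ * H * W = Matrix.fromBlocks R D 0 (-Rᵀ)) := by
  have hHam : IsHamiltonian H := by
    simpa only [IsHamiltonian, stdJ_eq_neg_J, Matrix.neg_mul, transpose_neg, neg_inj] using hH
  simp only [stdJ_eq_neg_J, neg_mulVec, dotProduct_neg, neg_eq_zero, Matrix.mul_neg,
    Matrix.neg_mul, neg_inj, ← SymplecticGroup.mem_iff']
  constructor
  · rintro ⟨hrank, hlag, hinv⟩
    obtain ⟨W, hW, R, D, hL, hHW⟩ := IsLagrangian.exists_mem_symplecticGroup_conj_eq_fromBlocks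
      hHam ⟨hrank.trans (Fintype.card_fin N).symm, hlag⟩ hinv
    exact ⟨W, R, D, hW, hL, hHW⟩
  · rintro ⟨W, R, D, hW, rfl, hHW⟩
    obtain ⟨hrank, hlag⟩ := isLagrangian_range_mul_fromRowsOneZero hW
    exact ⟨hrank.trans (Fintype.card_fin N), hlag,
      mulVec_mem_range_mul_fromRowsOneZero (SymplecticGroup.symplectic_det hW) hHW⟩
end

section
/- Let J_{2N} = [[0, I_N], [−I_N, 0]], let S ∈ ℝ^{2N×2N} be J_{2N}-Hamiltonian, and let X ⊆ ℝ^{2N} be a subspace invariant under S such that every complex eigenvalue λ of the restriction of S to X (i.e. every root of the characteristic polynomial of S restricted to X) satisfies Re(λ) < 0. Then X is isotropic, i.e. xᵀJ_{2N}y = 0 for all x, y ∈ X. -/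
open Matrix

/-- Two nonzero complex polynomials with no common root are coprime. -/
lemma no_common_root_isCoprime {p q : Polynomial ℂ} (hp : p ≠ 0)
    (h : ∀ z : ℂ, p.IsRoot z → q.IsRoot z → False) : IsCoprime p q := by
  classical
  rw [← EuclideanDomain.gcd_isUnit_iff]
  by_contra hu
  have hg0 : EuclideanDomain.gcd p q ≠ 0 := by
    intro h0
    exact hp (EuclideanDomain.gcd_eq_zero_iff.mp h0).1
  have hdeg : (EuclideanDomain.gcd p q).degree ≠ 0 := by
    intro hd
    exact hu (Polynomial.isUnit_iff_degree_eq_zero.mpr hd)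
  obtain ⟨z, hz⟩ := Complex.exists_root (Polynomial.degree_pos_of_ne_zero_of_nonunit hg0 hu)
  exact h z (hz.dvd (EuclideanDomain.gcd_dvd_left p q))
    (hz.dvd (EuclideanDomain.gcd_dvd_right p q))

/-- An invariant subspace of a Hamiltonian matrix `S` all of whose associated eigenvalues
(the complex roots of the characteristic polynomial of the restriction of `S`) have negative
real part is isotropic. -/
theorem invariant_stable_subspace_isotropic {N : ℕ}
    (S : Matrix (Fin N ⊕ Fin N) (Fin N ⊕ Fin N) ℝ)
    (hS : (stdJ N * S)ᵀ = stdJ N * S)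
    (X : Submodule ℝ (Fin N ⊕ Fin N → ℝ))
    (hinv : ∀ x ∈ X, S.mulVecLin x ∈ X)
    (heig : ∀ μ : ℂ,
      (((S.mulVecLin.restrict hinv).charpoly).map (algebraMap ℝ ℂ)).IsRoot μ → μ.re < 0) :
    ∀ x ∈ X, ∀ y ∈ X, x ⬝ᵥ (stdJ N *ᵥ y) = 0 := by
  classical
  set J := stdJ N with hJdef
  have hJt : Jᵀ = -J := by
    simp [hJdef, stdJ, Matrix.fromBlocks_transpose, Matrix.fromBlocks_neg]
  -- `Sᵀ * J = -(J * S)`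
  have hSJ : Sᵀ * J = -(J * S) := by
    have h1 : Sᵀ * Jᵀ = J * S := by rw [← Matrix.transpose_mul, hS]
    rw [hJt] at h1
    have := congrArg Neg.neg h1
    simpa [Matrix.mul_neg, neg_neg] using this
  -- key skew-adjointness relation
  have hKey : ∀ v w : Fin N ⊕ Fin N → ℝ,
      (S *ᵥ v) ⬝ᵥ (J *ᵥ w) = -(v ⬝ᵥ (J *ᵥ (S *ᵥ w))) := by
    intro v w
    calc (S *ᵥ v) ⬝ᵥ (J *ᵥ w) = ((v ᵥ* Sᵀ) ᵥ* J) ⬝ᵥ w := by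
          rw [Matrix.dotProduct_mulVec, Matrix.vecMul_transpose]
      _ = (v ᵥ* (Sᵀ * J)) ⬝ᵥ w := by rw [Matrix.vecMul_vecMul]
      _ = -((v ᵥ* (J * S)) ⬝ᵥ w) := by rw [hSJ, Matrix.vecMul_neg, neg_dotProduct]
      _ = -(v ⬝ᵥ (J *ᵥ (S *ᵥ w))) := by
          rw [← Matrix.dotProduct_mulVec, Matrix.mulVec_mulVec]
  set T := S.mulVecLin.restrict hinv with hTdef
  have hTapp : ∀ x : X, ((T x : Fin N ⊕ Fin N → ℝ)) = S *ᵥ (x : Fin N ⊕ Fin N → ℝ) := by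
    intro x; rfl
  -- bilinear relation on X
  have hstep : ∀ x y : X,
      ((T x : Fin N ⊕ Fin N → ℝ)) ⬝ᵥ (J *ᵥ (y : Fin N ⊕ Fin N → ℝ))
        = -(((x : Fin N ⊕ Fin N → ℝ)) ⬝ᵥ (J *ᵥ ((T y : Fin N ⊕ Fin N → ℝ)))) := by
    intro x y
    rw [hTapp, hTapp]
    exact hKey _ _
  have hpow : ∀ (n : ℕ) (x y : X),
      (((T ^ n) x : Fin N ⊕ Fin N → ℝ)) ⬝ᵥ (J *ᵥ (y : Fin N ⊕ Fin N → ℝ))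
        = (-1 : ℝ) ^ n * (((x : Fin N ⊕ Fin N → ℝ)) ⬝ᵥ (J *ᵥ (((T ^ n) y : Fin N ⊕ Fin N → ℝ)))) := by
    intro n
    induction n with
    | zero => intro x y; simp
    | succ n ih =>
      intro x y
      have h1 : (T ^ (n + 1)) x = (T ^ n) (T x) := by
        rw [pow_succ]; exact Module.End.mul_apply _ _ _
      have h2 : (T ^ (n + 1)) y = T ((T ^ n) y) := by
        rw [pow_succ']; exact Module.End.mul_apply _ _ _
      rw [h1, h2, ih (T x) y, hstep x ((T ^ n) y)]
      ring
  -- polynomial version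
  have hpoly : ∀ (r : Polynomial ℝ) (x y : X),
      (((Polynomial.aeval T r) x : Fin N ⊕ Fin N → ℝ)) ⬝ᵥ (J *ᵥ (y : Fin N ⊕ Fin N → ℝ))
        = ((x : Fin N ⊕ Fin N → ℝ)) ⬝ᵥ
            (J *ᵥ (((Polynomial.aeval T (r.comp (-Polynomial.X))) y : Fin N ⊕ Fin N → ℝ))) := by
    intro r
    induction r using Polynomial.induction_on' with
    | add f g hf hg =>
      intro x y
      rw [Polynomial.add_comp, map_add, map_add]
      simp only [LinearMap.add_apply, Submodule.coe_add, add_dotProduct,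
        Matrix.mulVec_add, dotProduct_add]
      rw [hf x y, hg x y]
    | monomial n c =>
      intro x y
      have hm : (Polynomial.aeval T) (Polynomial.monomial n c) = c • (T ^ n) := by
        simp [Polynomial.aeval_monomial, Algebra.algebraMap_eq_smul_one, smul_mul_assoc]
      have hmc : (Polynomial.monomial n c).comp (-Polynomial.X)
          = Polynomial.C ((-1 : ℝ) ^ n * c) * Polynomial.X ^ n := by
        rw [Polynomial.monomial_comp, neg_pow]
        simp only [Polynomial.C_mul, Polynomial.C_pow, Polynomial.C_neg, Polynomial.C_1]
        ring
      have hm2 : (Polynomial.aeval T) ((Polynomial.monomial n c).comp (-Polynomial.X))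
          = ((-1 : ℝ) ^ n * c) • (T ^ n) := by
        rw [hmc, _root_.map_mul, Polynomial.aeval_C, map_pow, Polynomial.aeval_X,
          Algebra.algebraMap_eq_smul_one, smul_mul_assoc, one_mul]
      rw [hm, hm2]
      simp only [LinearMap.smul_apply, Submodule.coe_smul, smul_dotProduct,
        Matrix.mulVec_smul, dotProduct_smul, smul_eq_mul]
      rw [hpow n x y]
      ring
  -- the characteristic polynomial and its reflection are coprime
  set p := T.charpoly with hpdef
  set q := p.comp (-Polynomial.X) with hqdef
  have hqp : q.comp (-Polynomial.X) = p := by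
    rw [hqdef, Polynomial.comp_assoc]
    simp
  have hcop : IsCoprime p q := by
    rw [← Polynomial.isCoprime_map (algebraMap ℝ ℂ)]
    apply no_common_root_isCoprime
    · exact (T.charpoly_monic.map (algebraMap ℝ ℂ)).ne_zero
    · intro z hz1 hz2
      have h1 : z.re < 0 := heig z hz1
      have h2 : (-z).re < 0 := by
        apply heig
        have : (q.map (algebraMap ℝ ℂ)).eval z
            = (p.map (algebraMap ℝ ℂ)).eval (-z) := by
          rw [hqdef, Polynomial.map_comp]
          simp [Polynomial.eval_comp]
        rw [Polynomial.IsRoot] at hz2 ⊢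
        rw [← this]; exact hz2
      simp only [Complex.neg_re] at h2
      linarith
  obtain ⟨a, b, hab⟩ := hcop
  have hCH : Polynomial.aeval T p = 0 := T.aeval_self_charpoly
  intro x hx y hy
  set x' : X := ⟨x, hx⟩
  set y' : X := ⟨y, hy⟩
  -- x' = aeval T (q * b) x'
  have hx1 : (Polynomial.aeval T (q * b)) x' = x' := by
    have h1 := congrArg (fun r => (Polynomial.aeval T r) x') hab
    simp only [map_add, _root_.map_mul, _root_.map_one, LinearMap.add_apply, Module.End.mul_apply,
      Module.End.one_apply] at h1
    rw [hCH] at h1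
    simp only [LinearMap.zero_apply, map_zero, zero_add] at h1
    rw [mul_comm q b, _root_.map_mul]
    simpa using h1
  have hy0 : (Polynomial.aeval T p) y' = 0 := by rw [hCH]; rfl
  have : x ⬝ᵥ (J *ᵥ y) = 0 := by
    have e1 : x ⬝ᵥ (J *ᵥ y)
        = (((Polynomial.aeval T (q * b)) x' : Fin N ⊕ Fin N → ℝ)) ⬝ᵥ (J *ᵥ (y' : Fin N ⊕ Fin N → ℝ)) := by
      rw [hx1]
    rw [e1, _root_.map_mul, Module.End.mul_apply, hpoly q ((Polynomial.aeval T b) x') y', hqp, hy0]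
    simp
  exact this
end

section
/- Let J_{2N} = [[0, I_N], [−I_N, 0]], let S ∈ ℝ^{2N×2N} be skew-Hamiltonian (i.e. J_{2N}S is skew-symmetric), and let u ∈ ℝ^{2N} be any vector. Then for every j ≥ 1 the Krylov subspace K_j(S, u) = span{u, Su, S²u, …, S^{j−1}u} is isotropic, i.e. xᵀJ_{2N}y = 0 for all x, y ∈ K_j(S, u). -/
open Matrix

theorem stdJ_transpose (N : ℕ) : (stdJ N)ᵀ = -stdJ N := by
  ext i k
  cases i <;> cases k <;> simp [stdJ, Matrix.fromBlocks, Matrix.one_apply, eq_comm]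

/-- For a skew-Hamiltonian matrix `S` and any vector `u`, every Krylov subspace
`K_j(S, u) = span{u, Su, …, S^{j-1}u}` is isotropic. -/
theorem krylov_subspace_isotropic {N : ℕ}
    (S : Matrix (Fin N ⊕ Fin N) (Fin N ⊕ Fin N) ℝ)
    (hS : (stdJ N * S)ᵀ = -(stdJ N * S))
    (u : Fin N ⊕ Fin N → ℝ) (j : ℕ) (hj : 1 ≤ j) :
    ∀ x ∈ Submodule.span ℝ (Set.range fun i : Fin j => (S ^ (i : ℕ)) *ᵥ u),
      ∀ y ∈ Submodule.span ℝ (Set.range fun i : Fin j => (S ^ (i : ℕ)) *ᵥ u),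
        x ⬝ᵥ (stdJ N *ᵥ y) = 0 := by
  have hJT := stdJ_transpose N
  have hSJ : Sᵀ * stdJ N = stdJ N * S := by
    have h : Sᵀ * (stdJ N)ᵀ = -(stdJ N * S) := by
      rw [← Matrix.transpose_mul, hS]
    rw [hJT] at h
    have : -(Sᵀ * stdJ N) = -(stdJ N * S) := by
      rw [← h]; noncomm_ring
    exact neg_injective this
  have hpow : ∀ m : ℕ, (S ^ m)ᵀ * stdJ N = stdJ N * S ^ m := by
    intro m
    induction m with
    | zero => simp
    | succ n ih =>
      rw [pow_succ, Matrix.transpose_mul, Matrix.mul_assoc, ih, ← Matrix.mul_assoc,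
        hSJ, Matrix.mul_assoc]
      congr 1
      rw [← pow_succ', ← pow_succ]
  have skew : ∀ A : Matrix (Fin N ⊕ Fin N) (Fin N ⊕ Fin N) ℝ, Aᵀ = -A →
      u ⬝ᵥ (A *ᵥ u) = 0 := by
    intro A hA
    have h1 : u ⬝ᵥ (A *ᵥ u) = (Aᵀ *ᵥ u) ⬝ᵥ u := by
      rw [Matrix.dotProduct_mulVec, Matrix.mulVec_transpose]
    rw [hA, Matrix.neg_mulVec, neg_dotProduct] at h1
    rw [dotProduct_comm] at h1 ⊢
    linarith
  have hgen : ∀ a b : ℕ, (S ^ a *ᵥ u) ⬝ᵥ (stdJ N *ᵥ (S ^ b *ᵥ u)) = 0 := by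
    intro a b
    have key : (S ^ a)ᵀ * (stdJ N * S ^ b) = stdJ N * S ^ (a + b) := by
      rw [← Matrix.mul_assoc, hpow, Matrix.mul_assoc, ← pow_add]
    have h1 : (S ^ a *ᵥ u) ⬝ᵥ (stdJ N *ᵥ (S ^ b *ᵥ u))
        = u ⬝ᵥ ((stdJ N * S ^ (a + b)) *ᵥ u) :=
      calc (S ^ a *ᵥ u) ⬝ᵥ (stdJ N *ᵥ (S ^ b *ᵥ u))
          = (S ^ a *ᵥ u) ⬝ᵥ ((stdJ N * S ^ b) *ᵥ u) := by rw [Matrix.mulVec_mulVec]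
        _ = (u ᵥ* (S ^ a)ᵀ) ⬝ᵥ ((stdJ N * S ^ b) *ᵥ u) := by
            rw [← Matrix.mulVec_transpose, Matrix.transpose_transpose]
        _ = u ⬝ᵥ ((S ^ a)ᵀ *ᵥ ((stdJ N * S ^ b) *ᵥ u)) := (Matrix.dotProduct_mulVec _ _ _).symm
        _ = u ⬝ᵥ ((stdJ N * S ^ (a + b)) *ᵥ u) := by rw [Matrix.mulVec_mulVec, key]
    rw [h1]
    apply skew
    rw [Matrix.transpose_mul, hJT, Matrix.mul_neg, hpow]
  intro x hx y hy
  induction hx using Submodule.span_induction with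
  | mem x hxm =>
    induction hy using Submodule.span_induction with
    | mem y hym =>
      obtain ⟨a, rfl⟩ := hxm
      obtain ⟨b, rfl⟩ := hym
      exact hgen a b
    | zero => simp
    | add y z _ _ hy hz => rw [Matrix.mulVec_add, dotProduct_add, hy, hz, add_zero]
    | smul c y _ hy => rw [Matrix.mulVec_smul, dotProduct_smul, hy, smul_zero]
  | zero => simp
  | add x z _ _ hx hz => rw [add_dotProduct, hx, hz, add_zero]
  | smul c x _ hx => rw [smul_dotProduct, hx, smul_zero]
end
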